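/- arXiv:2509.24605 — 2 statements merged into one kernel-verified Lean document; each statement's English description precedes it below -/
import Mathlib

section
/- For the superpotential W(X₁,...,X_r) = Σᵢ e^{Xᵢ} + t·exp(−Σᵢ dᵢXᵢ) with t ∈ ℂ nonzero and positive integer weights d₁,...,d_r, the critical points of W modulo the identification Xᵢ ∼ Xᵢ + 2πi are exactly h^∨ = 1 + Σᵢ dᵢ in number. -/
/-!
Writing `P = ∏ⱼ yⱼ^{dⱼ}`, the equations say `yᵢ = dᵢ t P⁻¹`, so a solution is determined by `P`;
substituting back into the definition of `P` shows that the admissible values of `P` are exactly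
the `(1 + Σᵢ dᵢ)`-th roots of the nonzero number `t^{Σ dᵢ} ∏ⱼ dⱼ^{dⱼ}`, of which there are
`1 + Σᵢ dᵢ`.
-/

section CommGroup

variable {G ι : Type*} [CommGroup G] [Fintype ι]

theorem Finset.prod_mul_inv_pow_eq (c : ι → G) (d : ι → ℕ) (P : G) :
    ∏ j, (c j * P⁻¹) ^ d j = (∏ j, c j ^ d j) * (P ^ ∑ j, d j)⁻¹ := by
  simp only [mul_pow, inv_pow, Finset.prod_mul_distrib, Finset.prod_inv_distrib,
    Finset.prod_pow_eq_pow_sum]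

theorem Finset.prod_mul_inv_pow_eq_self {c : ι → G} {d : ι → ℕ} {P : G}
    (hP : P ^ (∑ j, d j + 1) = ∏ j, c j ^ d j) : ∏ j, (c j * P⁻¹) ^ d j = P := by
  rw [Finset.prod_mul_inv_pow_eq, ← hP, pow_succ', mul_inv_cancel_right]

def weightedProdEquiv (c : ι → G) (d : ι → ℕ) :
    {y : ι → G // ∀ i, y i = c i * (∏ j, y j ^ d j)⁻¹} ≃
      {P : G // P ^ (∑ j, d j + 1) = ∏ j, c j ^ d j} where
  toFun y := ⟨∏ j, y.1 j ^ d j, by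
    obtain ⟨y, hy⟩ := y
    set P := ∏ j, y j ^ d j
    have hP : P = (∏ j, c j ^ d j) * (P ^ ∑ j, d j)⁻¹ := by
      rw [← Finset.prod_mul_inv_pow_eq]
      exact Finset.prod_congr rfl fun j _ => by rw [← hy j]
    rw [pow_succ', eq_mul_inv_iff_mul_eq.mp hP]⟩
  invFun P := ⟨fun i => c i * P.1⁻¹, fun i => by rw [Finset.prod_mul_inv_pow_eq_self P.2]⟩
  left_inv y := Subtype.ext <| funext fun i => (y.2 i).symm
  right_inv P := Subtype.ext <| Finset.prod_mul_inv_pow_eq_self P.2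

def powEqEquivPowEqOne (n : ℕ) (b : G) : {x : G // x ^ n = b ^ n} ≃ {x : G // x ^ n = 1} where
  toFun x := ⟨x.1 * b⁻¹, by rw [mul_pow, x.2, inv_pow, mul_inv_cancel]⟩
  invFun x := ⟨x.1 * b, by rw [mul_pow, x.2, one_mul]⟩
  left_inv x := Subtype.ext <| inv_mul_cancel_right x.1 b
  right_inv x := Subtype.ext <| mul_inv_cancel_right x.1 b

end CommGroup

theorem IsAlgClosed.exists_units_pow_eq {k : Type*} [Field k] [IsAlgClosed k] (a : kˣ) {n : ℕ}
    (hn : 0 < n) : ∃ b : kˣ, b ^ n = a := by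
  obtain ⟨z, hz⟩ := IsAlgClosed.exists_pow_nat_eq (a : k) hn
  have hz0 : z ≠ 0 := by
    rintro rfl
    exact a.ne_zero (by rw [← hz, zero_pow hn.ne'])
  exact ⟨Units.mk0 z hz0, Units.ext <| by simpa using hz⟩

theorem Complex.card_units_pow_eq (a : ℂˣ) {n : ℕ} (hn : 0 < n) :
    Nat.card {x : ℂˣ // x ^ n = a} = n := by
  have : NeZero n := ⟨hn.ne'⟩
  obtain ⟨b, rfl⟩ := IsAlgClosed.exists_units_pow_eq a hn
  calc Nat.card {x : ℂˣ // x ^ n = b ^ n} = Nat.card {x : ℂˣ // x ^ n = 1} :=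
        Nat.card_congr (powEqEquivPowEqOne n b)
    _ = Nat.card (rootsOfUnity n ℂ) :=
        Nat.card_congr (Equiv.subtypeEquivRight fun x => (_root_.mem_rootsOfUnity n x).symm)
    _ = n := Complex.card_rootsOfUnity n

/-- The critical points of the Landau–Ginzburg superpotential
`W = Σᵢ e^{Xᵢ} + t exp(-Σᵢ dᵢ Xᵢ)` (with `t ≠ 0`, positive integer weights `dᵢ`), counted
modulo `Xᵢ ∼ Xᵢ + 2πi` — equivalently, solutions `y ∈ (ℂ^×)^r` of
`yᵢ = dᵢ · t · (∏ⱼ yⱼ^{dⱼ})⁻¹` — are exactly `h^∨ = 1 + Σᵢ dᵢ` in number. -/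
theorem lg_critical_point_count (r : ℕ) (d : Fin r → ℕ) (hd : ∀ i, 0 < d i)
    (t : ℂ) (ht : t ≠ 0) :
    Nat.card {y : Fin r → ℂˣ //
        ∀ i, (y i : ℂ) = (d i : ℂ) * t * (∏ j, (y j : ℂ) ^ (d j))⁻¹} =
      1 + ∑ i, d i := by
  let c : Fin r → ℂˣ := fun i => Units.mk0 ((d i : ℂ) * t)
    (mul_ne_zero (Nat.cast_ne_zero.2 (hd i).ne') ht)
  have hsystem : ∀ y : Fin r → ℂˣ, (∀ i, (y i : ℂ) = (d i : ℂ) * t * (∏ j, (y j : ℂ) ^ (d j))⁻¹)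
      ↔ ∀ i, y i = c i * (∏ j, y j ^ d j)⁻¹ := fun y => by
    simp only [Units.ext_iff, Units.val_mul, Units.val_inv_eq_inv_val, Units.coe_prod,
      Units.val_pow_eq_pow_val, c, Units.val_mk0]
  rw [Nat.card_congr ((Equiv.subtypeEquivRight hsystem).trans (weightedProdEquiv c d)),
    Complex.card_units_pow_eq _ (Nat.succ_pos _), add_comm]
end

section
/- Let E be the elliptic curve over ℂ with j-invariant 0 (i.e. y² = x³ + w⁶ in ℙ(1,2,3)) carrying the ℤ/6 automorphism group. Let S = ℂ[w,x,y]/(y² − x³ − w⁶) graded with deg w = 1, deg x = 2, deg y = 3. For the subgroup H ⊂ ℤ/6 × ℤ/3 × ℤ/2 acting by (w,x,y) ↦ (ζ₆^{k₆} w, ζ₃^{k₃} x, (−1)^{k₂} y) with (d₆,d₃,d₂)=(6,3,2), the invariant ring S^H is the free polynomial ring ℂ[x³, y²] on two generators of degree 6 each. -/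
open MvPolynomial

/-- The relation ideal of the curve `y² = x³ + w⁶` in variables `w = X 0`, `x = X 1`,
`y = X 2`. -/
noncomputable def bolzaLikeIdeal : Ideal (MvPolynomial (Fin 3) ℂ) :=
  Ideal.span {X 2 ^ 2 - X 1 ^ 3 - X 0 ^ 6}

/-- The homogeneous coordinate ring `S = ℂ[w,x,y]/(y² - x³ - w⁶)` of the elliptic curve
with `j = 0`. -/
noncomputable abbrev SRing : Type :=
  MvPolynomial (Fin 3) ℂ ⧸ bolzaLikeIdeal

/-!
Averaging over `H = μ₆ × μ₃ × μ₂` is a projection onto the invariants. Upstairs in `ℂ[w,x,y]`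
it kills every monomial `w^a x^b y^c` unless `6 ∣ a`, `3 ∣ b` and `2 ∣ c`, so the average of a
lift of an invariant lies in `ℂ[w⁶, x³, y²]`; in `S` the relation `w⁶ = y² - x³` leaves
`ℂ[x³, y²]`. The generators `x³` and `y²` are algebraically independent because `(x³, y²)`
takes every value `(a, b) ∈ ℂ²` on the affine curve: choose `x³ = a`, `y² = b`, `w⁶ = b - a`.
-/

open Finset

theorem ZMod.sum_val_eq_sum_range {M : Type*} [AddCommMonoid M] (n : ℕ) [NeZero n]
    (f : ℕ → M) : ∑ k : ZMod n, f k.val = ∑ j ∈ range n, f j := by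
  cases n with
  | zero => exact absurd rfl (NeZero.ne 0)
  | succ n => exact Fin.sum_univ_eq_sum_range f (n + 1)

theorem IsPrimitiveRoot.sum_pow_val_mul {K : Type*} [CommRing K] [IsDomain K] {z : K} {n : ℕ}
    [NeZero n] (hz : IsPrimitiveRoot z n) (m : ℕ) :
    ∑ k : ZMod n, z ^ (k.val * m) = if n ∣ m then (n : K) else 0 := by
  simp_rw [ZMod.sum_val_eq_sum_range n (fun j => z ^ (j * m)), mul_comm _ m, pow_mul]
  split_ifs with h
  · simp [(hz.pow_eq_one_iff_dvd m).2 h]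
  · have hne : z ^ m - 1 ≠ 0 := sub_ne_zero.2 fun h1 => h ((hz.pow_eq_one_iff_dvd m).1 h1)
    refine (mul_eq_zero.1 ?_).resolve_right hne
    rw [geom_sum_mul, ← pow_mul, mul_comm, pow_mul, hz.pow_eq_one, one_pow, sub_self]

theorem smul_pow_eq_pow_of_pow_eq_one {R A : Type*} [CommSemiring R] [Semiring A] [Algebra R A]
    {c : R} {d : ℕ} (hc : c ^ d = 1) (j : ℕ) (a : A) : (c ^ j • a) ^ d = a ^ d := by
  rw [smul_pow, ← pow_mul, mul_comm, pow_mul, hc, one_pow, one_smul]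

namespace MvPolynomial

theorem monomial_mem_adjoin_X_pow {σ R : Type*} [Fintype σ] [CommSemiring R]
    {m : σ →₀ ℕ} {n : σ → ℕ} (h : ∀ i, n i ∣ m i) (a : R) :
    monomial m a ∈ Algebra.adjoin R (Set.range fun i => (X i ^ n i : MvPolynomial σ R)) := by
  rw [monomial_eq, Finsupp.prod_fintype _ _ fun _ => pow_zero _]
  refine Subalgebra.mul_mem _ (Subalgebra.algebraMap_mem _ a)
    (Subalgebra.prod_mem _ fun i _ => ?_)
  obtain ⟨q, hq⟩ := h i
  rw [hq, pow_mul]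
  exact pow_mem (Algebra.subset_adjoin (Set.mem_range_self i)) q

theorem weightedTotalDegree_X_pow {σ R : Type*} [CommSemiring R] [Nontrivial R]
    (w : σ → ℕ) (i : σ) (e : ℕ) :
    weightedTotalDegree w (X i ^ e : MvPolynomial σ R) = e * w i := by
  classical
  rw [X_pow_eq_monomial, weightedTotalDegree, support_monomial, if_neg one_ne_zero,
    sup_singleton, Finsupp.weight_single, smul_eq_mul]

section DiagonalAction

variable {σ K : Type*} [Fintype σ] [CommRing K] {n : σ → ℕ}

noncomputable def diagonalAction (ζ : σ → K) (k : ∀ i, ZMod (n i)) :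
    MvPolynomial σ K →ₐ[K] MvPolynomial σ K :=
  aeval fun i => ζ i ^ (k i).val • X i

theorem diagonalAction_monomial (ζ : σ → K) (k : ∀ i, ZMod (n i)) (m : σ →₀ ℕ) (a : K) :
    diagonalAction ζ k (monomial m a) = (∏ i, ζ i ^ ((k i).val * m i)) • monomial m a := by
  rw [diagonalAction, aeval_monomial, Finsupp.prod_fintype _ _ fun _ => pow_zero _, monomial_eq,
    Finsupp.prod_fintype _ _ fun _ => pow_zero _]
  simp only [smul_eq_C_mul, mul_pow, prod_mul_distrib, ← map_pow, ← map_prod, ← pow_mul,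
    algebraMap_eq]
  ring

variable [DecidableEq σ] [IsDomain K] [∀ i, NeZero (n i)] {ζ : σ → K}

theorem sum_diagonalAction_monomial (hζ : ∀ i, IsPrimitiveRoot (ζ i) (n i)) (m : σ →₀ ℕ)
    (a : K) :
    ∑ k : ∀ i, ZMod (n i), diagonalAction ζ k (monomial m a) =
      (∏ i, if n i ∣ m i then (n i : K) else 0) • monomial m a := by
  simp only [diagonalAction_monomial, ← sum_smul, ← (hζ _).sum_pow_val_mul,
    Fintype.prod_sum fun i (j : ZMod (n i)) => ζ i ^ (j.val * m i)]

theorem sum_diagonalAction_mem_adjoin_X_pow (hζ : ∀ i, IsPrimitiveRoot (ζ i) (n i))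
    (p : MvPolynomial σ K) :
    ∑ k : ∀ i, ZMod (n i), diagonalAction ζ k p ∈
      Algebra.adjoin K (Set.range fun i => (X i ^ n i : MvPolynomial σ K)) := by
  induction p using MvPolynomial.induction_on' with
  | monomial m a =>
    rw [sum_diagonalAction_monomial hζ]
    by_cases h : ∀ i, n i ∣ m i
    · exact Subalgebra.smul_mem _ (monomial_mem_adjoin_X_pow h a) _
    · obtain ⟨i, hi⟩ := not_forall.1 h
      rw [prod_eq_zero (mem_univ i) (if_neg hi), zero_smul]
      exact zero_mem _
  | add p q hp hq =>
    simpa only [map_add, sum_add_distrib] using add_mem hp hq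

end DiagonalAction

theorem mem_map_adjoin_X_pow_of_forall_act_eq {σ K S : Type*} [Fintype σ] [DecidableEq σ]
    [Field K] [CommRing S] [Algebra K S] {n : σ → ℕ} [∀ i, NeZero (n i)] {ζ : σ → K}
    (hζ : ∀ i, IsPrimitiveRoot (ζ i) (n i)) (f : MvPolynomial σ K →ₐ[K] S)
    (hf : Function.Surjective f) (act : (∀ i, ZMod (n i)) → S →ₐ[K] S)
    (hact : ∀ k, f.comp (diagonalAction ζ k) = (act k).comp f) {s : S}
    (hs : ∀ k, act k s = s) :
    s ∈ (Algebra.adjoin K (Set.range fun i => (X i ^ n i : MvPolynomial σ K))).map f := by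
  obtain ⟨p, rfl⟩ := hf s
  set c : K := Nat.cast (Fintype.card (∀ i, ZMod (n i)))
  have hc : c ≠ 0 := by
    simp only [c, Fintype.card_pi, ZMod.card, Nat.cast_prod]
    exact prod_ne_zero_iff.2 fun i _ => (hζ i).neZero'.out
  have hsum : f (∑ k : ∀ i, ZMod (n i), diagonalAction ζ k p) = c • f p :=
    calc f (∑ k : ∀ i, ZMod (n i), diagonalAction ζ k p) = ∑ k : ∀ i, ZMod (n i), f p := by
          rw [map_sum]
          exact sum_congr rfl fun k _ => (AlgHom.congr_fun (hact k) p).trans (hs k)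
      _ = c • f p := by rw [sum_const, card_univ, ← Nat.cast_smul_eq_nsmul K]
  refine ⟨c⁻¹ • ∑ k : ∀ i, ZMod (n i), diagonalAction ζ k p,
    Subalgebra.smul_mem _ (sum_diagonalAction_mem_adjoin_X_pow hζ p) _, ?_⟩
  simp only [AlgHom.coe_toRingHom, map_smul, hsum, smul_smul, inv_mul_cancel₀ hc, one_smul]

end MvPolynomial

def scalingOrder : Fin 3 → ℕ := ![6, 3, 2]

noncomputable def scalingRoot : Fin 3 → ℂ :=
  ![Complex.exp (2 * Real.pi * Complex.I / 6), Complex.exp (2 * Real.pi * Complex.I / 3), -1]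

instance (i : Fin 3) : NeZero (scalingOrder i) := ⟨by fin_cases i <;> decide⟩

theorem isPrimitiveRoot_scalingRoot (i : Fin 3) :
    IsPrimitiveRoot (scalingRoot i) (scalingOrder i) := by
  fin_cases i
  exacts [Complex.isPrimitiveRoot_exp 6 (by norm_num), Complex.isPrimitiveRoot_exp 3 (by norm_num),
    .neg_one 0 (by norm_num)]

theorem mk_X_zero_pow_six :
    Ideal.Quotient.mk bolzaLikeIdeal (X 0 ^ 6) =
      Ideal.Quotient.mk bolzaLikeIdeal (X 2 ^ 2) - Ideal.Quotient.mk bolzaLikeIdeal (X 1 ^ 3) := by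
  rw [← map_sub, eq_comm, ← sub_eq_zero, ← map_sub, Ideal.Quotient.eq_zero_iff_mem]
  exact Ideal.subset_span rfl

theorem map_adjoin_X_pow_le_adjoin :
    (Algebra.adjoin ℂ (Set.range fun i => (X i ^ scalingOrder i : MvPolynomial (Fin 3) ℂ))).map
        (Ideal.Quotient.mkₐ ℂ bolzaLikeIdeal) ≤
      Algebra.adjoin ℂ {Ideal.Quotient.mk bolzaLikeIdeal (X 1 ^ 3),
        Ideal.Quotient.mk bolzaLikeIdeal (X 2 ^ 2)} := by
  rw [AlgHom.map_adjoin, Algebra.adjoin_le_iff, ← Set.range_comp]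
  rintro _ ⟨i, rfl⟩
  fin_cases i
  · show Ideal.Quotient.mk _ (X 0 ^ 6) ∈ _
    rw [mk_X_zero_pow_six]
    exact sub_mem (Algebra.subset_adjoin (by simp)) (Algebra.subset_adjoin (by simp))
  · exact Algebra.subset_adjoin (by simp [scalingOrder])
  · exact Algebra.subset_adjoin (by simp [scalingOrder])

theorem algebraicIndependent_mk_X_one_pow_three_X_two_pow_two :
    AlgebraicIndependent ℂ ![Ideal.Quotient.mk bolzaLikeIdeal (X 1 ^ 3),
      Ideal.Quotient.mk bolzaLikeIdeal (X 2 ^ 2)] := by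
  rw [algebraicIndependent_iff]
  intro P hP
  have hmem : aeval ![(X 1 ^ 3 : MvPolynomial (Fin 3) ℂ), X 2 ^ 2] P ∈ bolzaLikeIdeal := by
    have hcomp : (fun i => Ideal.Quotient.mkₐ ℂ bolzaLikeIdeal (![X 1 ^ 3, X 2 ^ 2] i)) =
        ![Ideal.Quotient.mk bolzaLikeIdeal (X 1 ^ 3),
          Ideal.Quotient.mk bolzaLikeIdeal (X 2 ^ 2)] := by
      funext i
      fin_cases i <;> rfl
    rwa [← Ideal.Quotient.eq_zero_iff_mem, ← Ideal.Quotient.mkₐ_eq_mk ℂ, comp_aeval_apply, hcomp]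
  obtain ⟨g, hg⟩ := Ideal.mem_span_singleton'.1 hmem
  refine MvPolynomial.funext fun v => ?_
  obtain ⟨x, hx⟩ := IsAlgClosed.exists_pow_nat_eq (v 0) three_pos
  obtain ⟨y, hy⟩ := IsAlgClosed.exists_pow_nat_eq (v 1) two_pos
  obtain ⟨w, hw⟩ := IsAlgClosed.exists_pow_nat_eq (v 1 - v 0) (by norm_num : 0 < 6)
  have hpoint :
      (fun i => aeval ![w, x, y] (![X 1 ^ 3, X 2 ^ 2] i : MvPolynomial (Fin 3) ℂ)) = v := by
    funext i
    fin_cases i <;> simp [hx, hy]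
  have hcurve : y ^ 2 - x ^ 3 - w ^ 6 = 0 := by
    rw [hx, hy, hw]
    ring
  have hg_eval := congr_arg (aeval ![w, x, y]) hg
  rw [comp_aeval_apply, hpoint] at hg_eval
  simpa [hcurve] using hg_eval.symm

theorem mkₐ_comp_diagonalAction
    (act : ZMod 6 → ZMod 3 → ZMod 2 → (SRing →ₐ[ℂ] SRing))
    (hw : ∀ k₆ k₃ k₂, act k₆ k₃ k₂ (Ideal.Quotient.mk bolzaLikeIdeal (X 0)) =
      Complex.exp (2 * Real.pi * Complex.I / 6) ^ (k₆.val) •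
        Ideal.Quotient.mk bolzaLikeIdeal (X 0))
    (hx : ∀ k₆ k₃ k₂, act k₆ k₃ k₂ (Ideal.Quotient.mk bolzaLikeIdeal (X 1)) =
      Complex.exp (2 * Real.pi * Complex.I / 3) ^ (k₃.val) •
        Ideal.Quotient.mk bolzaLikeIdeal (X 1))
    (hy : ∀ k₆ k₃ k₂, act k₆ k₃ k₂ (Ideal.Quotient.mk bolzaLikeIdeal (X 2)) =
      ((-1 : ℂ)) ^ (k₂.val) • Ideal.Quotient.mk bolzaLikeIdeal (X 2))
    (k : ∀ i, ZMod (scalingOrder i)) :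
    (Ideal.Quotient.mkₐ ℂ bolzaLikeIdeal).comp (diagonalAction scalingRoot k) =
      (act (k 0) (k 1) (k 2)).comp (Ideal.Quotient.mkₐ ℂ bolzaLikeIdeal) :=
  algHom_ext fun i => by
    fin_cases i <;>
      simp only [AlgHom.comp_apply, diagonalAction, aeval_X, map_smul, Ideal.Quotient.mkₐ_eq_mk] <;>
      [exact (hw _ _ _).symm; exact (hx _ _ _).symm; exact (hy _ _ _).symm]

theorem adjoin_subset_invariants
    (act : ZMod 6 → ZMod 3 → ZMod 2 → (SRing →ₐ[ℂ] SRing))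
    (hx : ∀ k₆ k₃ k₂, act k₆ k₃ k₂ (Ideal.Quotient.mk bolzaLikeIdeal (X 1)) =
      Complex.exp (2 * Real.pi * Complex.I / 3) ^ (k₃.val) •
        Ideal.Quotient.mk bolzaLikeIdeal (X 1))
    (hy : ∀ k₆ k₃ k₂, act k₆ k₃ k₂ (Ideal.Quotient.mk bolzaLikeIdeal (X 2)) =
      ((-1 : ℂ)) ^ (k₂.val) • Ideal.Quotient.mk bolzaLikeIdeal (X 2)) :
    ↑(Algebra.adjoin ℂ ({Ideal.Quotient.mk bolzaLikeIdeal (X 1 ^ 3),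
        Ideal.Quotient.mk bolzaLikeIdeal (X 2 ^ 2)} : Set SRing)) ⊆
      {s : SRing | ∀ k₆ k₃ k₂, act k₆ k₃ k₂ s = s} := fun s hs k₆ k₃ k₂ => by
  refine (Algebra.adjoin_le (S := AlgHom.equalizer (act k₆ k₃ k₂) (AlgHom.id ℂ SRing)) ?_) hs
  rintro _ (rfl | rfl)
  · show act k₆ k₃ k₂ (Ideal.Quotient.mk _ (X 1 ^ 3)) = Ideal.Quotient.mk _ (X 1 ^ 3)
    rw [map_pow, map_pow, hx]
    exact smul_pow_eq_pow_of_pow_eq_one (A := SRing) (isPrimitiveRoot_scalingRoot 1).pow_eq_one _ _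
  · show act k₆ k₃ k₂ (Ideal.Quotient.mk _ (X 2 ^ 2)) = Ideal.Quotient.mk _ (X 2 ^ 2)
    rw [map_pow, map_pow, hy]
    exact smul_pow_eq_pow_of_pow_eq_one (A := SRing) (isPrimitiveRoot_scalingRoot 2).pow_eq_one _ _

/-- For the full group `H = ℤ/6 × ℤ/3 × ℤ/2` acting on `S = ℂ[w,x,y]/(y² - x³ - w⁶)` by
`(w,x,y) ↦ (ζ₆^{k₆} w, ζ₃^{k₃} x, (-1)^{k₂} y)` (the case `(d₆,d₃,d₂) = (6,3,2)`), the
invariant ring `S^H` is the free polynomial ring `ℂ[x³, y²]` on two generators of degree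
`6` each (for the grading `deg w = 1`, `deg x = 2`, `deg y = 3`). -/
theorem invariant_ring_free_polynomial
    (act : ZMod 6 → ZMod 3 → ZMod 2 → (SRing →ₐ[ℂ] SRing))
    (hw : ∀ k₆ k₃ k₂, act k₆ k₃ k₂ (Ideal.Quotient.mk bolzaLikeIdeal (X 0)) =
      Complex.exp (2 * Real.pi * Complex.I / 6) ^ (k₆.val) •
        Ideal.Quotient.mk bolzaLikeIdeal (X 0))
    (hx : ∀ k₆ k₃ k₂, act k₆ k₃ k₂ (Ideal.Quotient.mk bolzaLikeIdeal (X 1)) =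
      Complex.exp (2 * Real.pi * Complex.I / 3) ^ (k₃.val) •
        Ideal.Quotient.mk bolzaLikeIdeal (X 1))
    (hy : ∀ k₆ k₃ k₂, act k₆ k₃ k₂ (Ideal.Quotient.mk bolzaLikeIdeal (X 2)) =
      ((-1 : ℂ)) ^ (k₂.val) • Ideal.Quotient.mk bolzaLikeIdeal (X 2)) :
    -- the invariants are exactly the subalgebra generated by x³ and y²
    {s : SRing | ∀ k₆ k₃ k₂, act k₆ k₃ k₂ s = s} =
      ↑(Algebra.adjoin ℂ ({Ideal.Quotient.mk bolzaLikeIdeal (X 1 ^ 3),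
          Ideal.Quotient.mk bolzaLikeIdeal (X 2 ^ 2)} : Set SRing)) ∧
    -- that subalgebra is a free polynomial ring on two generators
    Nonempty ((Algebra.adjoin ℂ ({Ideal.Quotient.mk bolzaLikeIdeal (X 1 ^ 3),
          Ideal.Quotient.mk bolzaLikeIdeal (X 2 ^ 2)} : Set SRing)) ≃ₐ[ℂ]
        MvPolynomial (Fin 2) ℂ) ∧
    -- the two generators have degree 6 for the weights (1,2,3)
    weightedTotalDegree (fun i : Fin 3 => (i : ℕ) + 1) (X 1 ^ 3 : MvPolynomial (Fin 3) ℂ)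
        = 6 ∧
    weightedTotalDegree (fun i : Fin 3 => (i : ℕ) + 1) (X 2 ^ 2 : MvPolynomial (Fin 3) ℂ)
        = 6 := by
  refine ⟨subset_antisymm (fun s hs => map_adjoin_X_pow_le_adjoin ?_)
    (adjoin_subset_invariants act hx hy), ?_, by simp [weightedTotalDegree_X_pow],
    by simp [weightedTotalDegree_X_pow]⟩
  · exact mem_map_adjoin_X_pow_of_forall_act_eq isPrimitiveRoot_scalingRoot _
      (Ideal.Quotient.mkₐ_surjective ℂ _) _ (mkₐ_comp_diagonalAction act hw hx hy)
      fun k => hs _ _ _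
  · rw [← Matrix.range_cons_cons_empty _ _ ![]]
    exact ⟨algebraicIndependent_mk_X_one_pow_three_X_two_pow_two.aevalEquiv.symm⟩
end
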